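/- For 0 ≤ s ≤ 1/2, the Birkhoff flow S_B(t,ζ) = (ζ_n e^{i t ω_n(ζ)})_{n≥1} defines for each t ∈ ℝ a norm-preserving homeomorphism of h^{1/2−s}_+, the curve t ↦ S_B(t,ζ) is continuous into h^{1/2−s}_+ for each ζ, and for each T > 0 the map ζ ↦ S_B(·,ζ) is continuous from h^{1/2−s}_+ into C([−T,T], h^{1/2−s}_+). Moreover S_B satisfies the group property S_B(t₁, S_B(t₂,ζ)) = S_B(t₁+t₂, ζ). -/

import Mathlib

noncomputable section

open scoped BigOperators

/-- Membership of `h^t_+`: sequences indexed by `k : ℕ` (the mode `k+1 ≥ 1`)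
with `∑ (k+1)^{2t} |ζ_k|² < ∞`. -/
def hMem (t : ℝ) (ζ : ℕ → ℂ) : Prop :=
  Summable fun k : ℕ => ((k : ℝ) + 1) ^ (2 * t) * ‖ζ k‖ ^ 2

/-- The `h^t_+` norm. -/
def hNorm (t : ℝ) (ζ : ℕ → ℂ) : ℝ :=
  Real.sqrt (∑' k : ℕ, ((k : ℝ) + 1) ^ (2 * t) * ‖ζ k‖ ^ 2)

/-- The Benjamin–Ono frequency `ω_n(ζ) = n² − 2 ∑_{k≥1} min(n,k)|ζ_k|²`. -/
def omegaBO (n : ℕ) (ζ : ℕ → ℂ) : ℝ :=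
  (n : ℝ) ^ 2 - 2 * ∑' k : ℕ, min (n : ℝ) ((k : ℝ) + 1) * ‖ζ k‖ ^ 2

/-- The Birkhoff flow `S_B(τ,ζ)_n = ζ_n e^{i τ ω_n(ζ)}` (mode `n = k+1`). -/
def SBflow (τ : ℝ) (ζ : ℕ → ℂ) : ℕ → ℂ :=
  fun k => ζ k * Complex.exp (Complex.I * ((omegaBO (k + 1) ζ * τ : ℝ) : ℂ))

/-!
The flow only rotates each mode, `|S_B(τ,ζ)_n| = |ζ_n|`, so the actions and hence the
frequencies `ω_n` are constant along orbits; this gives the invariance of the norm and the group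
property. Continuity of `τ ↦ S_B(τ,ζ)` is dominated convergence, every mode being bounded by
`2|ζ_n|`. For continuity in `ζ`, uniformly in `|τ| ≤ T`, write
`S_B(τ,ζ') - S_B(τ,ζ) = (ζ' - ζ) e^{iτω(ζ')} + ζ (e^{iτω(ζ')} - e^{iτω(ζ)})`: the first term has
norm `‖ζ' - ζ‖`, and the second tends to `0` by dominated convergence, because for `t ≥ 0`
Cauchy–Schwarz gives `|ω_n(ζ') - ω_n(ζ)| ≤ 2n (‖ζ' - ζ‖² + 2‖ζ‖ ‖ζ' - ζ‖)`.
-/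

open Filter Topology Finset

lemma norm_add_sq_le {E : Type*} [SeminormedAddCommGroup E] (a b : E) :
    ‖a + b‖ ^ 2 ≤ ‖a‖ ^ 2 + ‖b‖ ^ 2 + 2 * (‖a‖ * ‖b‖) := by
  nlinarith [pow_le_pow_left₀ (norm_nonneg _) (norm_add_le a b) 2]

lemma abs_norm_sq_sub_norm_sq_le {E : Type*} [SeminormedAddCommGroup E] (a b : E) :
    |‖a‖ ^ 2 - ‖b‖ ^ 2| ≤ ‖a - b‖ ^ 2 + 2 * (‖b‖ * ‖a - b‖) := by
  have h₁ := abs_norm_sub_norm_le a b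
  have h₂ : |‖a‖ - ‖b‖ + 2 * ‖b‖| ≤ ‖a - b‖ + 2 * ‖b‖ :=
    (abs_add_le _ _).trans (add_le_add h₁ (abs_of_nonneg (by positivity)).le)
  rw [show ‖a‖ ^ 2 - ‖b‖ ^ 2 = (‖a‖ - ‖b‖) * (‖a‖ - ‖b‖ + 2 * ‖b‖) by ring, abs_mul]
  calc |‖a‖ - ‖b‖| * |‖a‖ - ‖b‖ + 2 * ‖b‖| ≤ ‖a - b‖ * (‖a - b‖ + 2 * ‖b‖) :=
        mul_le_mul h₁ h₂ (abs_nonneg _) (norm_nonneg _)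
    _ = ‖a - b‖ ^ 2 + 2 * (‖b‖ * ‖a - b‖) := by ring

section WeightedSequences

variable {t : ℝ}

lemma one_le_succ_rpow_two_mul (ht : 0 ≤ t) (k : ℕ) : 1 ≤ ((k : ℝ) + 1) ^ (2 * t) :=
  Real.one_le_rpow (by linarith [k.cast_nonneg (α := ℝ)]) (by linarith)

lemma hMem_congr_norm {ζ ξ : ℕ → ℂ} (h : ∀ k, ‖ξ k‖ = ‖ζ k‖) : hMem t ξ ↔ hMem t ζ := by
  simp only [hMem, h]

lemma hNorm_congr_norm {ζ ξ : ℕ → ℂ} (h : ∀ k, ‖ξ k‖ = ‖ζ k‖) : hNorm t ξ = hNorm t ζ := by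
  simp only [hNorm, h]

lemma hNorm_nonneg (ζ : ℕ → ℂ) : 0 ≤ hNorm t ζ := Real.sqrt_nonneg _

lemma hNorm_sq (ζ : ℕ → ℂ) : hNorm t ζ ^ 2 = ∑' k : ℕ, ((k : ℝ) + 1) ^ (2 * t) * ‖ζ k‖ ^ 2 :=
  Real.sq_sqrt (tsum_nonneg fun k => by positivity)

lemma hMem.summable_mul_norm {ζ ξ : ℕ → ℂ} (hζ : hMem t ζ) (hξ : hMem t ξ) :
    Summable fun k : ℕ => ((k : ℝ) + 1) ^ (2 * t) * (‖ζ k‖ * ‖ξ k‖) :=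
  (Summable.add hζ hξ).of_nonneg_of_le (fun k => by positivity) fun k => by
    rw [← mul_add]
    gcongr
    nlinarith [sq_nonneg (‖ζ k‖ - ‖ξ k‖)]

lemma tsum_mul_norm_mul_norm_le {ζ ξ : ℕ → ℂ} (hζ : hMem t ζ) (hξ : hMem t ξ) :
    ∑' k : ℕ, ((k : ℝ) + 1) ^ (2 * t) * (‖ζ k‖ * ‖ξ k‖) ≤ hNorm t ζ * hNorm t ξ := by
  refine Real.tsum_le_of_sum_range_le (fun k => by positivity) fun n => ?_
  set w : ℕ → ℝ := fun k => ((k : ℝ) + 1) ^ (2 * t)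
  calc ∑ k ∈ range n, w k * (‖ζ k‖ * ‖ξ k‖)
      = ∑ k ∈ range n, √(w k * ‖ζ k‖ ^ 2) * √(w k * ‖ξ k‖ ^ 2) := by
        refine sum_congr rfl fun k _ => ?_
        rw [← Real.sqrt_mul (by positivity), show w k * ‖ζ k‖ ^ 2 * (w k * ‖ξ k‖ ^ 2)
          = (w k * (‖ζ k‖ * ‖ξ k‖)) ^ 2 by ring, Real.sqrt_sq (by positivity)]
    _ ≤ √(∑ k ∈ range n, w k * ‖ζ k‖ ^ 2) * √(∑ k ∈ range n, w k * ‖ξ k‖ ^ 2) :=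
        Real.sum_sqrt_mul_sqrt_le _ (fun k => by positivity) fun k => by positivity
    _ ≤ hNorm t ζ * hNorm t ξ :=
        mul_le_mul (Real.sqrt_le_sqrt (hζ.sum_le_tsum _ fun k _ => by positivity))
          (Real.sqrt_le_sqrt (hξ.sum_le_tsum _ fun k _ => by positivity))
          (Real.sqrt_nonneg _) (hNorm_nonneg ζ)

lemma weight_mul_norm_add_sq_le (ζ ξ : ℕ → ℂ) (k : ℕ) :
    ((k : ℝ) + 1) ^ (2 * t) * ‖(ζ + ξ) k‖ ^ 2
      ≤ ((k : ℝ) + 1) ^ (2 * t) * ‖ζ k‖ ^ 2 + ((k : ℝ) + 1) ^ (2 * t) * ‖ξ k‖ ^ 2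
        + 2 * (((k : ℝ) + 1) ^ (2 * t) * (‖ζ k‖ * ‖ξ k‖)) := by
  have := mul_le_mul_of_nonneg_left (norm_add_sq_le (ζ k) (ξ k))
    (Real.rpow_nonneg (by positivity : (0 : ℝ) ≤ k + 1) (2 * t))
  rw [Pi.add_apply]
  linarith

lemma hMem.add {ζ ξ : ℕ → ℂ} (hζ : hMem t ζ) (hξ : hMem t ξ) : hMem t (ζ + ξ) :=
  Summable.of_nonneg_of_le (fun k => by positivity) (weight_mul_norm_add_sq_le ζ ξ)
    ((Summable.add hζ hξ).add ((hζ.summable_mul_norm hξ).mul_left 2))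

lemma hNorm_add_le {ζ ξ : ℕ → ℂ} (hζ : hMem t ζ) (hξ : hMem t ξ) :
    hNorm t (ζ + ξ) ≤ hNorm t ζ + hNorm t ξ := by
  refine Real.sqrt_le_iff.mpr ⟨add_nonneg (hNorm_nonneg ζ) (hNorm_nonneg ξ), ?_⟩
  calc ∑' k : ℕ, ((k : ℝ) + 1) ^ (2 * t) * ‖(ζ + ξ) k‖ ^ 2
      ≤ ∑' k : ℕ, (((k : ℝ) + 1) ^ (2 * t) * ‖ζ k‖ ^ 2 + ((k : ℝ) + 1) ^ (2 * t) * ‖ξ k‖ ^ 2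
          + 2 * (((k : ℝ) + 1) ^ (2 * t) * (‖ζ k‖ * ‖ξ k‖))) :=
        (hζ.add hξ).tsum_le_tsum (weight_mul_norm_add_sq_le ζ ξ)
          ((Summable.add hζ hξ).add ((hζ.summable_mul_norm hξ).mul_left 2))
    _ = hNorm t ζ ^ 2 + hNorm t ξ ^ 2
          + 2 * ∑' k : ℕ, ((k : ℝ) + 1) ^ (2 * t) * (‖ζ k‖ * ‖ξ k‖) := by
        rw [(Summable.add hζ hξ).tsum_add ((hζ.summable_mul_norm hξ).mul_left 2),
          Summable.tsum_add hζ hξ, tsum_mul_left, hNorm_sq, hNorm_sq]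
    _ ≤ (hNorm t ζ + hNorm t ξ) ^ 2 := by
        nlinarith [tsum_mul_norm_mul_norm_le hζ hξ]

lemma hMem.neg {ζ : ℕ → ℂ} (hζ : hMem t ζ) : hMem t (-ζ) :=
  (hMem_congr_norm fun k => norm_neg (ζ k)).mpr hζ

lemma hMem.sub {ζ ξ : ℕ → ℂ} (hζ : hMem t ζ) (hξ : hMem t ξ) : hMem t (ζ - ξ) := by
  simpa only [sub_eq_add_neg] using hζ.add hξ.neg

lemma hMem.of_norm_le_mul {ζ ξ : ℕ → ℂ} {C : ℝ} (hζ : hMem t ζ) (h : ∀ k, ‖ξ k‖ ≤ C * ‖ζ k‖) :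
    hMem t ξ :=
  Summable.of_nonneg_of_le (fun k => by positivity) (fun k => by
      rw [mul_left_comm, ← mul_pow]
      gcongr
      exact h k)
    (hζ.mul_left (C ^ 2))

theorem tendsto_hNorm_zero_of_dominated {ι : Type*} {l : Filter ι} {f : ι → ℕ → ℂ}
    {ζ : ℕ → ℂ} {C : ℝ} (hζ : hMem t ζ) (hbound : ∀ᶠ x in l, ∀ k, ‖f x k‖ ≤ C * ‖ζ k‖)
    (hlim : ∀ k, Tendsto (fun x => f x k) l (𝓝 0)) :
    Tendsto (fun x => hNorm t (f x)) l (𝓝 0) := by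
  have hsq : Tendsto (fun x => ∑' k : ℕ, ((k : ℝ) + 1) ^ (2 * t) * ‖f x k‖ ^ 2) l (𝓝 0) := by
    simpa using tendsto_tsum_of_dominated_convergence (hζ.mul_left (C ^ 2))
      (fun k => ((hlim k).norm.pow 2).const_mul (((k : ℝ) + 1) ^ (2 * t)))
      (hbound.mono fun x hx k => by
        rw [Real.norm_of_nonneg (by positivity), mul_left_comm, ← mul_pow]
        gcongr
        exact hx k)
  have := (Real.continuous_sqrt.tendsto 0).comp hsq
  rwa [Real.sqrt_zero] at this

lemma norm_SBflow_apply (τ : ℝ) (ζ : ℕ → ℂ) (k : ℕ) : ‖SBflow τ ζ k‖ = ‖ζ k‖ := by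
  rw [SBflow, norm_mul, Complex.norm_exp_I_mul_ofReal, mul_one]

lemma omegaBO_SBflow (τ : ℝ) (ζ : ℕ → ℂ) (n : ℕ) : omegaBO n (SBflow τ ζ) = omegaBO n ζ := by
  simp only [omegaBO, norm_SBflow_apply]

lemma SBflow_zero (ζ : ℕ → ℂ) : SBflow 0 ζ = ζ := by
  funext k
  simp [SBflow]

lemma SBflow_SBflow (τ₁ τ₂ : ℝ) (ζ : ℕ → ℂ) : SBflow τ₁ (SBflow τ₂ ζ) = SBflow (τ₁ + τ₂) ζ := by
  funext k
  simp only [SBflow, omegaBO_SBflow, mul_assoc, ← Complex.exp_add]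
  push_cast
  ring_nf

lemma norm_exp_I_mul_sub_exp_I_mul_le (a b : ℝ) :
    ‖Complex.exp (Complex.I * a) - Complex.exp (Complex.I * b)‖ ≤ |a - b| := by
  have : Complex.exp (Complex.I * a) - Complex.exp (Complex.I * b)
      = Complex.exp (Complex.I * b) * (Complex.exp (Complex.I * (a - b : ℝ)) - 1) := by
    rw [mul_sub, mul_one, ← Complex.exp_add]
    push_cast
    ring_nf
  rw [this, norm_mul, Complex.norm_exp_I_mul_ofReal, one_mul]
  exact Real.norm_exp_I_mul_ofReal_sub_one_le

lemma norm_exp_I_mul_sub_exp_I_mul_le_two (a b : ℝ) :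
    ‖Complex.exp (Complex.I * a) - Complex.exp (Complex.I * b)‖ ≤ 2 := by
  refine (norm_sub_le _ _).trans ?_
  rw [Complex.norm_exp_I_mul_ofReal, Complex.norm_exp_I_mul_ofReal]
  norm_num

theorem tendsto_hNorm_mul_exp_sub_exp {ι : Type*} {l : Filter ι} {ζ : ℕ → ℂ} (hζ : hMem t ζ)
    {a b : ι → ℕ → ℝ} (hab : ∀ k, Tendsto (fun x => a x k - b x k) l (𝓝 0)) :
    Tendsto (fun x => hNorm t fun k =>
      ζ k * (Complex.exp (Complex.I * a x k) - Complex.exp (Complex.I * b x k))) l (𝓝 0) := by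
  refine tendsto_hNorm_zero_of_dominated (C := 2) hζ (Eventually.of_forall fun x k => ?_)
    fun k => ?_
  · rw [norm_mul, mul_comm]
    gcongr
    exact norm_exp_I_mul_sub_exp_I_mul_le_two _ _
  · refine squeeze_zero_norm' (Eventually.of_forall fun x => ?_)
      (by simpa using (hab k).abs.const_mul ‖ζ k‖)
    rw [norm_mul]
    gcongr
    exact norm_exp_I_mul_sub_exp_I_mul_le _ _

theorem tendsto_hNorm_SBflow_sub_SBflow {ζ : ℕ → ℂ} (hζ : hMem t ζ) (τ₀ : ℝ) :
    Tendsto (fun τ => hNorm t (SBflow τ ζ - SBflow τ₀ ζ)) (𝓝 τ₀) (𝓝 0) := by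
  have hsplit (τ : ℝ) : SBflow τ ζ - SBflow τ₀ ζ = fun k => ζ k *
      (Complex.exp (Complex.I * ((omegaBO (k + 1) ζ * τ : ℝ) : ℂ))
        - Complex.exp (Complex.I * ((omegaBO (k + 1) ζ * τ₀ : ℝ) : ℂ))) := by
    funext k
    simp only [SBflow, Pi.sub_apply, mul_sub]
  simp only [hsplit]
  refine tendsto_hNorm_mul_exp_sub_exp hζ fun k => ?_
  have : Continuous fun τ => omegaBO (k + 1) ζ * τ - omegaBO (k + 1) ζ * τ₀ := by fun_prop
  simpa using this.tendsto τ₀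

lemma abs_omegaBO_sub_le (ht : 0 ≤ t) {ζ ξ : ℕ → ℂ} (hζ : hMem t ζ) (hξ : hMem t ξ) (n : ℕ) :
    |omegaBO n ξ - omegaBO n ζ|
      ≤ 2 * n * (hNorm t (ξ - ζ) ^ 2 + 2 * (hNorm t ζ * hNorm t (ξ - ζ))) := by
  set c : ℕ → ℝ := fun k => min (n : ℝ) ((k : ℝ) + 1)
  set w : ℕ → ℝ := fun k => ((k : ℝ) + 1) ^ (2 * t)
  have hc : ∀ k, 0 ≤ c k ∧ c k ≤ n * w k := fun k =>
    ⟨le_min n.cast_nonneg (by positivity),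
      (min_le_left _ _).trans
        (le_mul_of_one_le_right n.cast_nonneg (one_le_succ_rpow_two_mul ht k))⟩
  have hcsum : ∀ η : ℕ → ℂ, hMem t η → Summable fun k => c k * ‖η k‖ ^ 2 := fun η hη =>
    (hη.mul_left (n : ℝ)).of_nonneg_of_le (fun k => mul_nonneg (hc k).1 (by positivity))
      fun k => by rw [← mul_assoc]; gcongr; exact (hc k).2
  have hdiff : omegaBO n ξ - omegaBO n ζ = 2 * ∑' k, c k * (‖ζ k‖ ^ 2 - ‖ξ k‖ ^ 2) := by
    simp only [omegaBO, mul_sub]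
    rw [(hcsum ζ hζ).tsum_sub (hcsum ξ hξ)]
    ring
  have hbound : ∀ k, ‖c k * (‖ζ k‖ ^ 2 - ‖ξ k‖ ^ 2)‖
      ≤ n * (w k * ‖(ξ - ζ) k‖ ^ 2 + 2 * (w k * (‖ζ k‖ * ‖(ξ - ζ) k‖))) := fun k => by
    rw [Real.norm_eq_abs, abs_mul, abs_of_nonneg (hc k).1, abs_sub_comm]
    calc c k * |‖ξ k‖ ^ 2 - ‖ζ k‖ ^ 2|
        ≤ n * w k * (‖ξ k - ζ k‖ ^ 2 + 2 * (‖ζ k‖ * ‖ξ k - ζ k‖)) :=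
          mul_le_mul (hc k).2 (abs_norm_sq_sub_norm_sq_le _ _) (abs_nonneg _)
            (mul_nonneg n.cast_nonneg (by positivity))
      _ = _ := by rw [Pi.sub_apply]; ring
  have hsum := ((Summable.add (hξ.sub hζ)
    ((hζ.summable_mul_norm (hξ.sub hζ)).mul_left 2)).mul_left (n : ℝ)).hasSum
  calc |omegaBO n ξ - omegaBO n ζ|
      = 2 * ‖∑' k, c k * (‖ζ k‖ ^ 2 - ‖ξ k‖ ^ 2)‖ := by
        rw [hdiff, abs_mul, abs_two, Real.norm_eq_abs]
    _ ≤ 2 * (n * (hNorm t (ξ - ζ) ^ 2 + 2 * ∑' k, w k * (‖ζ k‖ * ‖(ξ - ζ) k‖))) := by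
        gcongr
        refine (tsum_of_norm_bounded hsum hbound).trans_eq ?_
        rw [tsum_mul_left, Summable.tsum_add (hξ.sub hζ)
          ((hζ.summable_mul_norm (hξ.sub hζ)).mul_left 2), tsum_mul_left, hNorm_sq]
    _ ≤ 2 * n * (hNorm t (ξ - ζ) ^ 2 + 2 * (hNorm t ζ * hNorm t (ξ - ζ))) := by
        rw [mul_assoc]
        gcongr
        exact tsum_mul_norm_mul_norm_le hζ (hξ.sub hζ)

lemma tendsto_omegaBO (ht : 0 ≤ t) {ι : Type*} {l : Filter ι} {f : ι → ℕ → ℂ} {ζ : ℕ → ℂ}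
    (hζ : hMem t ζ) (hf : ∀ᶠ x in l, hMem t (f x))
    (hd : Tendsto (fun x => hNorm t (f x - ζ)) l (𝓝 0)) (n : ℕ) :
    Tendsto (fun x => omegaBO n (f x)) l (𝓝 (omegaBO n ζ)) := by
  have hbound : Tendsto (fun x => 2 * n * (hNorm t (f x - ζ) ^ 2
      + 2 * (hNorm t ζ * hNorm t (f x - ζ)))) l (𝓝 0) := by
    simpa using ((hd.pow 2).add ((hd.const_mul (hNorm t ζ)).const_mul 2)).const_mul (2 * n : ℝ)
  refine tendsto_iff_norm_sub_tendsto_zero.mpr <| squeeze_zero_norm' (hf.mono fun x hx => ?_) hbound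
  rw [norm_norm, Real.norm_eq_abs]
  exact abs_omegaBO_sub_le ht hζ hx n

-- The filter is that of pairs `(ζ', τ)` with `ζ' → ζ` in `h^t_+` and `|τ| ≤ T`.
theorem tendsto_hNorm_SBflow_sub_SBflow_uniformly (ht : 0 ≤ t) {ζ : ℕ → ℂ} (hζ : hMem t ζ)
    (T : ℝ) :
    Tendsto (fun p : (ℕ → ℂ) × ℝ => hNorm t (SBflow p.2 p.1 - SBflow p.2 ζ))
      (comap (fun p => hNorm t (p.1 - ζ)) (𝓝 0) ⊓ 𝓟 {p | hMem t p.1 ∧ |p.2| ≤ T}) (𝓝 0) := by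
  set L := comap (fun p : (ℕ → ℂ) × ℝ => hNorm t (p.1 - ζ)) (𝓝 0) ⊓
    𝓟 {p | hMem t p.1 ∧ |p.2| ≤ T}
  have hd : Tendsto (fun p : (ℕ → ℂ) × ℝ => hNorm t (p.1 - ζ)) L (𝓝 0) :=
    tendsto_comap.mono_left inf_le_left
  have hL : ∀ᶠ p : (ℕ → ℂ) × ℝ in L, hMem t p.1 ∧ |p.2| ≤ T :=
    mem_inf_of_right (mem_principal_self _)
  have hω (n : ℕ) : Tendsto (fun p : (ℕ → ℂ) × ℝ => omegaBO n p.1) L (𝓝 (omegaBO n ζ)) :=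
    tendsto_omegaBO ht hζ (hL.mono fun _ hp => hp.1) hd n
  have hB : Tendsto (fun p : (ℕ → ℂ) × ℝ => hNorm t fun k => ζ k *
      (Complex.exp (Complex.I * ((omegaBO (k + 1) p.1 * p.2 : ℝ) : ℂ))
        - Complex.exp (Complex.I * ((omegaBO (k + 1) ζ * p.2 : ℝ) : ℂ)))) L (𝓝 0) := by
    refine tendsto_hNorm_mul_exp_sub_exp hζ fun k => squeeze_zero_norm' (hL.mono fun p hp => ?_)
      (by simpa using ((hω (k + 1)).sub_const (omegaBO (k + 1) ζ)).norm.const_mul T)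
    rw [← sub_mul, norm_mul, mul_comm, Real.norm_eq_abs (p.2)]
    exact mul_le_mul_of_nonneg_right hp.2 (norm_nonneg _)
  refine squeeze_zero' (Eventually.of_forall fun p => hNorm_nonneg _) (hL.mono fun p hp => ?_)
    (by simpa only [add_zero] using hd.add hB)
  set A : ℕ → ℂ := fun k => (p.1 k - ζ k) *
    Complex.exp (Complex.I * ((omegaBO (k + 1) p.1 * p.2 : ℝ) : ℂ))
  set B : ℕ → ℂ := fun k => ζ k *
    (Complex.exp (Complex.I * ((omegaBO (k + 1) p.1 * p.2 : ℝ) : ℂ))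
      - Complex.exp (Complex.I * ((omegaBO (k + 1) ζ * p.2 : ℝ) : ℂ)))
  have hA : ∀ k, ‖A k‖ = ‖(p.1 - ζ) k‖ := fun k => by
    rw [norm_mul, Complex.norm_exp_I_mul_ofReal, mul_one, Pi.sub_apply]
  have hB_le : ∀ k, ‖B k‖ ≤ 2 * ‖ζ k‖ := fun k => by
    rw [norm_mul, mul_comm]
    gcongr
    exact norm_exp_I_mul_sub_exp_I_mul_le_two _ _
  have hsplit : SBflow p.2 p.1 - SBflow p.2 ζ = A + B := by
    funext k
    simp only [SBflow, A, B, Pi.sub_apply, Pi.add_apply]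
    ring
  rw [hsplit, ← hNorm_congr_norm hA]
  exact hNorm_add_le ((hMem_congr_norm hA).mpr (hp.1.sub hζ)) (hζ.of_norm_le_mul hB_le)

end WeightedSequences

theorem stmt15_general (s : ℝ) (hs : s ≤ 1 / 2) :
    (∀ ζ : ℕ → ℂ, hMem (1 / 2 - s) ζ → ∀ τ : ℝ,
      hMem (1 / 2 - s) (SBflow τ ζ) ∧ hNorm (1 / 2 - s) (SBflow τ ζ) = hNorm (1 / 2 - s) ζ) ∧
    (∀ ζ : ℕ → ℂ, hMem (1 / 2 - s) ζ → SBflow 0 ζ = ζ) ∧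
    (∀ ζ : ℕ → ℂ, hMem (1 / 2 - s) ζ → ∀ τ₁ τ₂ : ℝ,
      SBflow τ₁ (SBflow τ₂ ζ) = SBflow (τ₁ + τ₂) ζ) ∧
    (∀ ζ : ℕ → ℂ, hMem (1 / 2 - s) ζ → ∀ τ₀ : ℝ, ∀ ε > (0 : ℝ), ∃ δ > (0 : ℝ), ∀ τ : ℝ,
      |τ - τ₀| < δ → hNorm (1 / 2 - s) (SBflow τ ζ - SBflow τ₀ ζ) < ε) ∧
    (∀ T > (0 : ℝ), ∀ ζ : ℕ → ℂ, hMem (1 / 2 - s) ζ → ∀ ε > (0 : ℝ), ∃ δ > (0 : ℝ),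
      ∀ ζ' : ℕ → ℂ, hMem (1 / 2 - s) ζ' → hNorm (1 / 2 - s) (ζ' - ζ) < δ →
        ∀ τ : ℝ, |τ| ≤ T → hNorm (1 / 2 - s) (SBflow τ ζ' - SBflow τ ζ) < ε) := by
  have ht : 0 ≤ 1 / 2 - s := by linarith
  refine ⟨fun ζ hζ τ => ⟨(hMem_congr_norm (norm_SBflow_apply τ ζ)).mpr hζ,
    hNorm_congr_norm (norm_SBflow_apply τ ζ)⟩, fun ζ _ => SBflow_zero ζ,
    fun ζ _ τ₁ τ₂ => SBflow_SBflow τ₁ τ₂ ζ, ?_, ?_⟩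
  · intro ζ hζ τ₀ ε hε
    obtain ⟨δ, hδ, h⟩ := Metric.eventually_nhds_iff.mp
      ((tendsto_hNorm_SBflow_sub_SBflow hζ τ₀).eventually (gt_mem_nhds hε))
    exact ⟨δ, hδ, fun τ hτ => h (by rwa [Real.dist_eq])⟩
  · intro T _ ζ hζ ε hε
    have h := (tendsto_hNorm_SBflow_sub_SBflow_uniformly ht hζ T).eventually (gt_mem_nhds hε)
    rw [eventually_inf_principal, eventually_comap, Metric.eventually_nhds_iff] at h
    obtain ⟨δ, hδ, h⟩ := h
    exact ⟨δ, hδ, fun ζ' hζ' hclose τ hτ => h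
      (by rwa [Real.dist_0_eq_abs, abs_of_nonneg (hNorm_nonneg _)]) (ζ', τ) rfl ⟨hζ', hτ⟩⟩

/-- For `0 ≤ s ≤ 1/2` the Birkhoff flow `S_B` preserves `h^{1/2−s}_+` and its
norm, satisfies `S_B(0,·) = id` and the group property (hence each `S_B(τ,·)`
is a norm-preserving homeomorphism of `h^{1/2−s}_+`), each trajectory
`τ ↦ S_B(τ,ζ)` is continuous, and `ζ ↦ S_B(·,ζ)` is continuous into
`C([−T,T], h^{1/2−s}_+)` for every `T > 0`. -/
theorem stmt15 (s : ℝ) (hs0 : 0 ≤ s) (hs : s ≤ 1 / 2) :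
    (∀ ζ : ℕ → ℂ, hMem (1 / 2 - s) ζ → ∀ τ : ℝ,
      hMem (1 / 2 - s) (SBflow τ ζ) ∧ hNorm (1 / 2 - s) (SBflow τ ζ) = hNorm (1 / 2 - s) ζ) ∧
    (∀ ζ : ℕ → ℂ, hMem (1 / 2 - s) ζ → SBflow 0 ζ = ζ) ∧
    (∀ ζ : ℕ → ℂ, hMem (1 / 2 - s) ζ → ∀ τ₁ τ₂ : ℝ,
      SBflow τ₁ (SBflow τ₂ ζ) = SBflow (τ₁ + τ₂) ζ) ∧
    (∀ ζ : ℕ → ℂ, hMem (1 / 2 - s) ζ → ∀ τ₀ : ℝ, ∀ ε > (0 : ℝ), ∃ δ > (0 : ℝ), ∀ τ : ℝ,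
      |τ - τ₀| < δ → hNorm (1 / 2 - s) (SBflow τ ζ - SBflow τ₀ ζ) < ε) ∧
    (∀ T > (0 : ℝ), ∀ ζ : ℕ → ℂ, hMem (1 / 2 - s) ζ → ∀ ε > (0 : ℝ), ∃ δ > (0 : ℝ),
      ∀ ζ' : ℕ → ℂ, hMem (1 / 2 - s) ζ' → hNorm (1 / 2 - s) (ζ' - ζ) < δ →
        ∀ τ : ℝ, |τ| ≤ T → hNorm (1 / 2 - s) (SBflow τ ζ' - SBflow τ ζ) < ε) :=
  stmt15_general s hs
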